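/- Let k ≥ 1 and let X be the random variable giving the number of peaks of a uniformly random permutation π ∈ S_{2k+1} whose inverse is a 213-cluster with k marked occurrences (i.e., the standardization of π^{-1}_{2j+1} π^{-1}_{2j+2} π^{-1}_{2j+3} is 213 for all 0 ≤ j ≤ k-1). Then E(X) = k(k-1)/(2k-1). -/

import Mathlib

open scoped Classical

noncomputable section

/-- One-line notation (0-based positions and values) of a permutation of `Fin n`. -/
def ofPerm {n : ℕ} (π : Equiv.Perm (Fin n)) : ℕ → ℕ :=
  fun i => if h : i < n then (π ⟨i, h⟩ : ℕ) else 0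

/-- Number of descents of a word of length `n`. -/
def desNum (n : ℕ) (w : ℕ → ℕ) : ℕ :=
  ((Finset.range (n - 1)).filter (fun i => w (i + 1) < w i)).card

/-- Number of peaks of a word of length `n`. -/
def pkNum (n : ℕ) (w : ℕ → ℕ) : ℕ :=
  ((Finset.Ico 1 (n - 1)).filter (fun i => w (i - 1) < w i ∧ w (i + 1) < w i)).card

/-- Number of left peaks of a word of length `n`. -/
def lpkNum (n : ℕ) (w : ℕ → ℕ) : ℕ :=
  ((Finset.range (n - 1)).filter
    (fun i => (1 ≤ i ∧ w (i - 1) < w i ∧ w (i + 1) < w i) ∨ (i = 0 ∧ w 1 < w 0))).card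

/-- A word of length `r*k+1` is a `2134⋯(r+1)`-cluster: in each window of length `r+1`
starting at position `r*j` (`0 ≤ j ≤ k-1`), the second entry is smallest, the first entry
is second smallest, and the remaining entries increase. -/
def IsCluster (r k : ℕ) (w : ℕ → ℕ) : Prop :=
  ∀ j < k, w (r * j + 1) < w (r * j) ∧ w (r * j) < w (r * j + 2) ∧
    ∀ l, 2 ≤ l → l < r → w (r * j + l) < w (r * j + l + 1)

/-- Permutations of `S_{rk+1}` whose inverse is a `2134⋯(r+1)`-cluster. -/
def clusterSet (r k : ℕ) : Finset (Equiv.Perm (Fin (r * k + 1))) :=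
  Finset.univ.filter (fun π => IsCluster r k (ofPerm π⁻¹))

-- helpers
lemma ofPerm_lt {m : ℕ} (π : Equiv.Perm (Fin m)) {i : ℕ} (h : i < m) : ofPerm π i < m := by
  simp only [ofPerm, dif_pos h]
  exact (π ⟨i, h⟩).isLt

lemma ofPerm_inj {m : ℕ} (π : Equiv.Perm (Fin m)) {i j : ℕ} (hi : i < m) (hj : j < m)
    (h : ofPerm π i = ofPerm π j) : i = j := by
  simp only [ofPerm, dif_pos hi, dif_pos hj] at h
  have := π.injective (Fin.ext h)
  exact congrArg Fin.val this

lemma ofPerm_inv_eq {m : ℕ} (π : Equiv.Perm (Fin m)) {p v : ℕ} (hp : p < m)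
    (h : ofPerm π p = v) : ofPerm π⁻¹ v = p := by
  have hv : v < m := h ▸ ofPerm_lt π hp
  simp only [ofPerm, dif_pos hp] at h
  simp only [ofPerm, dif_pos hv]
  have : π ⟨p, hp⟩ = ⟨v, hv⟩ := Fin.ext h
  rw [← this, Equiv.Perm.inv_def, Equiv.symm_apply_apply]

lemma ofPerm_apply_of_inv {m : ℕ} (π : Equiv.Perm (Fin m)) {v p : ℕ} (hv : v < m)
    (h : ofPerm π⁻¹ v = p) : ofPerm π p = v := by
  have := ofPerm_inv_eq π⁻¹ hv h
  rwa [inv_inv] at this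

lemma perm_ext {m : ℕ} {e e' : Equiv.Perm (Fin m)}
    (h : ∀ i < m, ofPerm e i = ofPerm e' i) : e = e' := by
  apply Equiv.ext
  intro i
  have := h i i.isLt
  simp only [ofPerm, dif_pos i.isLt] at this
  exact Fin.ext (by simpa using this)
lemma cluster_le_last {k : ℕ} {w : ℕ → ℕ} (hc : IsCluster 2 k w) {p : ℕ} (hp : p ≤ 2 * k) :
    w p ≤ w (2 * k) := by
  have even : ∀ t j, j + t = k → w (2 * j) ≤ w (2 * k) := by
    intro t
    induction t with
    | zero => intro j hj; subst hj; simp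
    | succ t ih =>
      intro j hj
      have h1 : j < k := by omega
      have h2 := (hc j h1).2.1
      have h3 := ih (j + 1) (by omega)
      calc w (2 * j) ≤ w (2 * j + 2) := le_of_lt h2
        _ = w (2 * (j + 1)) := by ring_nf
        _ ≤ w (2 * k) := h3
  rcases Nat.even_or_odd p with ⟨j, hj⟩ | ⟨j, hj⟩
  · have : p = 2 * j := by omega
    subst this
    exact even (k - j) j (by omega)
  · have hjk : j < k := by omega
    have h1 := (hc j hjk).1
    have h2 := even (k - j) j (by omega)
    calc w p = w (2 * j + 1) := by rw [hj]
      _ ≤ w (2 * j) := le_of_lt h1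
      _ ≤ w (2 * k) := h2
lemma cluster_last_eq {k : ℕ} (ρ : Equiv.Perm (Fin (2 * k + 1)))
    (hc : IsCluster 2 k (ofPerm ρ⁻¹)) : ofPerm ρ⁻¹ (2 * k) = 2 * k := by
  set v := ofPerm ρ (2 * k) with hv
  have hvlt : v < 2 * k + 1 := ofPerm_lt ρ (by omega)
  have h1 : ofPerm ρ⁻¹ v = 2 * k := ofPerm_inv_eq ρ (by omega) rfl
  have h2 : ofPerm ρ⁻¹ v ≤ ofPerm ρ⁻¹ (2 * k) := cluster_le_last hc (by omega)
  have h3 : ofPerm ρ⁻¹ (2 * k) < 2 * k + 1 := ofPerm_lt ρ⁻¹ (by omega)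
  omega

def insFun {n : ℕ} (ρ : Equiv.Perm (Fin (n + 1))) (x : ℕ) : Fin (n + 3) → Fin (n + 3) :=
  fun i =>
    if h1 : (i : ℕ) < min x n then
      ⟨(ρ ⟨i, by omega⟩ : ℕ), by have := (ρ ⟨(i : ℕ), by omega⟩).isLt; omega⟩
    else if h2 : (i : ℕ) = min x n then ⟨n + 1, by omega⟩
    else if h3 : (i : ℕ) < n + 2 then
      ⟨(ρ ⟨(i : ℕ) - 1, by omega⟩ : ℕ), by have := (ρ ⟨(i : ℕ) - 1, by omega⟩).isLt; omega⟩
    else ⟨n + 2, by omega⟩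

lemma insFun_val {n : ℕ} (ρ : Equiv.Perm (Fin (n + 1))) (x : ℕ) (i : Fin (n + 3)) :
    ((insFun ρ x i : Fin (n + 3)) : ℕ) =
      if (i : ℕ) < min x n then ofPerm ρ (i : ℕ)
      else if (i : ℕ) = min x n then n + 1
      else if (i : ℕ) < n + 2 then ofPerm ρ ((i : ℕ) - 1)
      else n + 2 := by
  unfold insFun
  split_ifs with h1 h2 h3
  · simp only [ofPerm]
    rw [dif_pos (show (i : ℕ) < n + 1 by omega)]
  · rfl
  · simp only [ofPerm]
    rw [dif_pos (show (i : ℕ) - 1 < n + 1 by omega)]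
  · rfl

lemma insFun_inj {n : ℕ} (ρ : Equiv.Perm (Fin (n + 1))) (x : ℕ) :
    Function.Injective (insFun ρ x) := by
  intro i j h
  have hv := congrArg Fin.val h
  rw [insFun_val, insFun_val] at hv
  have hi := i.isLt
  have hj := j.isLt
  apply Fin.ext
  split_ifs at hv
  all_goals try have B1 : ofPerm ρ (i : ℕ) < n + 1 := ofPerm_lt ρ (by omega)
  all_goals try have B2 : ofPerm ρ ((i : ℕ) - 1) < n + 1 := ofPerm_lt ρ (by omega)
  all_goals try have B3 : ofPerm ρ (j : ℕ) < n + 1 := ofPerm_lt ρ (by omega)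
  all_goals try have B4 : ofPerm ρ ((j : ℕ) - 1) < n + 1 := ofPerm_lt ρ (by omega)
  all_goals try omega
  all_goals (have h9 := ofPerm_inj ρ (by omega) (by omega) hv; omega)

def insPerm {n : ℕ} (ρ : Equiv.Perm (Fin (n + 1))) (x : ℕ) : Equiv.Perm (Fin (n + 3)) :=
  Equiv.ofBijective (insFun ρ x) (Finite.injective_iff_bijective.mp (insFun_inj ρ x))
lemma ins_apply {n : ℕ} (ρ : Equiv.Perm (Fin (n + 1))) {x : ℕ} (hx : x ≤ n) {i : ℕ}
    (hi : i < n + 3) :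
    ofPerm (insPerm ρ x) i =
      if i < x then ofPerm ρ i
      else if i = x then n + 1
      else if i < n + 2 then ofPerm ρ (i - 1)
      else n + 2 := by
  have hmin : min x n = x := min_eq_left hx
  have key : ofPerm (insPerm ρ x) i = ((insFun ρ x ⟨i, hi⟩ : Fin (n + 3)) : ℕ) := by
    simp only [ofPerm, dif_pos hi]; rfl
  rw [key, insFun_val, hmin]

lemma ins_apply_lt {n : ℕ} (ρ : Equiv.Perm (Fin (n + 1))) {x : ℕ} (hx : x ≤ n) {i : ℕ}
    (hi : i < x) : ofPerm (insPerm ρ x) i = ofPerm ρ i := by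
  rw [ins_apply ρ hx (by omega), if_pos hi]

lemma ins_apply_eq {n : ℕ} (ρ : Equiv.Perm (Fin (n + 1))) {x : ℕ} (hx : x ≤ n) :
    ofPerm (insPerm ρ x) x = n + 1 := by
  rw [ins_apply ρ hx (by omega), if_neg (by omega), if_pos rfl]

lemma ins_apply_gt {n : ℕ} (ρ : Equiv.Perm (Fin (n + 1))) {x : ℕ} (hx : x ≤ n) {i : ℕ}
    (h1 : x < i) (h2 : i < n + 2) : ofPerm (insPerm ρ x) i = ofPerm ρ (i - 1) := by
  rw [ins_apply ρ hx (by omega), if_neg (by omega), if_neg (by omega), if_pos h2]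

lemma ins_apply_last {n : ℕ} (ρ : Equiv.Perm (Fin (n + 1))) {x : ℕ} (hx : x ≤ n) :
    ofPerm (insPerm ρ x) (n + 2) = n + 2 := by
  rw [ins_apply ρ hx (by omega), if_neg (by omega), if_neg (by omega), if_neg (by omega)]

lemma ins_inv_small {n : ℕ} (ρ : Equiv.Perm (Fin (n + 1))) {x : ℕ} (hx : x ≤ n) {v : ℕ}
    (hv : v < n + 1) :
    ofPerm (insPerm ρ x)⁻¹ v =
      if ofPerm ρ⁻¹ v < x then ofPerm ρ⁻¹ v else ofPerm ρ⁻¹ v + 1 := by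
  have hplt : ofPerm ρ⁻¹ v < n + 1 := ofPerm_lt ρ⁻¹ hv
  have happ : ofPerm ρ (ofPerm ρ⁻¹ v) = v := ofPerm_apply_of_inv ρ hv rfl
  split_ifs with h
  · exact ofPerm_inv_eq _ (by omega) (by rw [ins_apply_lt ρ hx h]; exact happ)
  · refine ofPerm_inv_eq _ (by omega) ?_
    rw [ins_apply_gt ρ hx (by omega) (by omega)]
    simpa using happ

lemma ins_inv_mid {n : ℕ} (ρ : Equiv.Perm (Fin (n + 1))) {x : ℕ} (hx : x ≤ n) :
    ofPerm (insPerm ρ x)⁻¹ (n + 1) = x :=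
  ofPerm_inv_eq _ (by omega) (ins_apply_eq ρ hx)

lemma ins_inv_last {n : ℕ} (ρ : Equiv.Perm (Fin (n + 1))) {x : ℕ} (hx : x ≤ n) :
    ofPerm (insPerm ρ x)⁻¹ (n + 2) = n + 2 :=
  ofPerm_inv_eq _ (by omega) (ins_apply_last ρ hx)
lemma mem_ins_iff {k : ℕ} (ρ : Equiv.Perm (Fin (2 * k + 1))) {x : ℕ} (hx : x ≤ 2 * k) :
    (insPerm (n := 2 * k) ρ x) ∈ clusterSet 2 (k + 1) ↔ ρ ∈ clusterSet 2 k := by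
  simp only [clusterSet, Finset.mem_filter, Finset.mem_univ, true_and]
  constructor
  · intro H j hj
    have Hj := H j (by omega)
    have e0 := ins_inv_small ρ hx (v := 2 * j) (by omega)
    have e1 := ins_inv_small ρ hx (v := 2 * j + 1) (by omega)
    have e2 := ins_inv_small ρ hx (v := 2 * j + 2) (by omega)
    refine ⟨?_, ?_, ?_⟩
    · have := Hj.1
      rw [e0, e1] at this
      split_ifs at this <;> omega
    · have := Hj.2.1
      rw [e0, e2] at this
      split_ifs at this <;> omega
    · intro l h2 h3; omega
  · intro H j hj
    rcases Nat.lt_or_ge j k with hjk | hjk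
    · have Hj := H j hjk
      have e0 := ins_inv_small ρ hx (v := 2 * j) (by omega)
      have e1 := ins_inv_small ρ hx (v := 2 * j + 1) (by omega)
      have e2 := ins_inv_small ρ hx (v := 2 * j + 2) (by omega)
      refine ⟨?_, ?_, ?_⟩
      · rw [e0, e1]; have := Hj.1; split_ifs <;> omega
      · rw [e0, e2]; have := Hj.2.1; split_ifs <;> omega
      · intro l h2 h3; omega
    · have hjeq : j = k := by omega
      subst hjeq
      have hlast : ofPerm ρ⁻¹ (2 * j) = 2 * j := cluster_last_eq ρ H
      have e0 := ins_inv_small ρ hx (v := 2 * j) (by omega)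
      rw [hlast] at e0
      have e1 : ofPerm (insPerm (n := 2 * j) ρ x)⁻¹ (2 * j + 1) = x := ins_inv_mid ρ hx
      have e2 : ofPerm (insPerm (n := 2 * j) ρ x)⁻¹ (2 * j + 2) = 2 * j + 2 :=
        ins_inv_last ρ hx
      refine ⟨?_, ?_, ?_⟩
      · rw [e0, e1]; split_ifs <;> omega
      · rw [e0, e2]; split_ifs <;> omega
      · intro l h2 h3; omega
def Ind (n : ℕ) (w : ℕ → ℕ) (i : ℕ) : ℕ :=
  if 1 ≤ i ∧ i + 1 < n ∧ w (i - 1) < w i ∧ w (i + 1) < w i then 1 else 0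

lemma Ind_zero (n : ℕ) (w : ℕ → ℕ) : Ind n w 0 = 0 := by
  unfold Ind
  rw [if_neg]
  rintro ⟨h, -⟩
  omega

lemma pkNum_eq_sum (n M : ℕ) (hM : n - 1 ≤ M) (w : ℕ → ℕ) :
    pkNum n w = ∑ i ∈ Finset.range M, Ind n w i := by
  rw [pkNum, Finset.card_filter]
  have h1 : ∀ i ∈ Finset.Ico 1 (n - 1),
      (if w (i - 1) < w i ∧ w (i + 1) < w i then 1 else 0) = Ind n w i := by
    intro i hi
    rw [Finset.mem_Ico] at hi
    unfold Ind
    rw [if_congr (show _ ↔ (1 ≤ i ∧ i + 1 < n ∧ w (i - 1) < w i ∧ w (i + 1) < w i) from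
      ⟨fun h => ⟨hi.1, by omega, h⟩, fun h => h.2.2⟩) rfl rfl]
  rw [Finset.sum_congr rfl h1]
  apply Finset.sum_subset
  · intro i hi
    rw [Finset.mem_Ico] at hi
    rw [Finset.mem_range]
    omega
  · intro i _ hni
    rw [Finset.mem_Ico] at hni
    unfold Ind
    rw [if_neg]
    rintro ⟨h1, h2, -⟩
    exact hni ⟨h1, by omega⟩

lemma pk_ins {n : ℕ} (ρ : Equiv.Perm (Fin (n + 1))) {x : ℕ} (hx : x ≤ n) :
    pkNum (n + 3) (ofPerm (insPerm ρ x)) + Ind (n + 1) (ofPerm ρ) (x - 1)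
        + Ind (n + 1) (ofPerm ρ) x
      = pkNum (n + 1) (ofPerm ρ) + (if 1 ≤ x then 1 else 0) := by
  have wlt : ∀ i, i < n + 1 → ofPerm ρ i < n + 1 := fun i h => ofPerm_lt ρ h
  have keyA : ∀ i, i + 1 < x →
      Ind (n + 3) (ofPerm (insPerm ρ x)) i = Ind (n + 1) (ofPerm ρ) i := by
    intro i hi
    unfold Ind
    rw [ins_apply_lt ρ hx (show i - 1 < x by omega), ins_apply_lt ρ hx (show i < x by omega),
      ins_apply_lt ρ hx (show i + 1 < x by omega)]
    rw [if_congr (show _ ↔ (1 ≤ i ∧ i + 1 < n + 1 ∧ ofPerm ρ (i - 1) < ofPerm ρ i ∧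
        ofPerm ρ (i + 1) < ofPerm ρ i) from
      ⟨fun h => ⟨h.1, by omega, h.2.2⟩, fun h => ⟨h.1, by omega, h.2.2⟩⟩) rfl rfl]
  have keyB : 1 ≤ x → Ind (n + 3) (ofPerm (insPerm ρ x)) (x - 1) = 0 := by
    intro h1x
    have e1 : ofPerm (insPerm ρ x) ((x - 1) + 1) = n + 1 := by
      rw [show (x - 1) + 1 = x by omega]
      exact ins_apply_eq ρ hx
    have e2 : ofPerm (insPerm ρ x) (x - 1) = ofPerm ρ (x - 1) := ins_apply_lt ρ hx (by omega)
    have e3 : ofPerm ρ (x - 1) < n + 1 := wlt _ (by omega)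
    unfold Ind
    rw [if_neg]
    rintro ⟨-, -, -, hd⟩
    omega
  have keyC : Ind (n + 3) (ofPerm (insPerm ρ x)) x = if 1 ≤ x then 1 else 0 := by
    by_cases h1x : 1 ≤ x
    · rw [if_pos h1x]
      have e1 : ofPerm (insPerm ρ x) (x - 1) = ofPerm ρ (x - 1) := ins_apply_lt ρ hx (by omega)
      have e2 : ofPerm (insPerm ρ x) x = n + 1 := ins_apply_eq ρ hx
      have e3 : ofPerm (insPerm ρ x) (x + 1) = ofPerm ρ x := by
        rw [ins_apply_gt ρ hx (by omega) (by omega), Nat.add_sub_cancel]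
      have e4 : ofPerm ρ (x - 1) < n + 1 := wlt _ (by omega)
      have e5 : ofPerm ρ x < n + 1 := wlt _ (by omega)
      unfold Ind
      rw [if_pos ⟨h1x, by omega, by omega, by omega⟩]
    · rw [if_neg h1x]
      unfold Ind
      rw [if_neg]
      rintro ⟨h, -⟩
      omega
  have keyD : Ind (n + 3) (ofPerm (insPerm ρ x)) (x + 1) = 0 := by
    have e1 : ofPerm (insPerm ρ x) ((x + 1) - 1) = n + 1 := by
      rw [show (x + 1) - 1 = x by omega]
      exact ins_apply_eq ρ hx
    have e2 : ofPerm (insPerm ρ x) (x + 1) = ofPerm ρ x := by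
      rw [ins_apply_gt ρ hx (by omega) (by omega), Nat.add_sub_cancel]
    have e3 : ofPerm ρ x < n + 1 := wlt _ (by omega)
    unfold Ind
    rw [if_neg]
    rintro ⟨-, -, hc, -⟩
    omega
  have keyE : ∀ i, x + 2 ≤ i → i < n + 2 →
      Ind (n + 3) (ofPerm (insPerm ρ x)) i = Ind (n + 1) (ofPerm ρ) (i - 1) := by
    intro i hxi hin
    by_cases hi : i < n + 1
    · have e1 : ofPerm (insPerm ρ x) (i - 1) = ofPerm ρ (i - 2) := by
        rw [ins_apply_gt ρ hx (by omega) (by omega)]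
        congr 1
      have e2 : ofPerm (insPerm ρ x) i = ofPerm ρ (i - 1) :=
        ins_apply_gt ρ hx (by omega) (by omega)
      have e3 : ofPerm (insPerm ρ x) (i + 1) = ofPerm ρ i := by
        rw [ins_apply_gt ρ hx (by omega) (by omega), Nat.add_sub_cancel]
      unfold Ind
      rw [e1, e2, e3]
      rw [if_congr (show _ ↔ (1 ≤ i - 1 ∧ (i - 1) + 1 < n + 1 ∧
            ofPerm ρ ((i - 1) - 1) < ofPerm ρ (i - 1) ∧
            ofPerm ρ ((i - 1) + 1) < ofPerm ρ (i - 1)) from ?_) rfl rfl]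
      constructor
      · rintro ⟨h1, h2, h3, h4⟩
        refine ⟨by omega, by omega, ?_, ?_⟩
        · rw [show (i - 1) - 1 = i - 2 by omega]; exact h3
        · rw [show (i - 1) + 1 = i by omega]; exact h4
      · rintro ⟨h1, h2, h3, h4⟩
        refine ⟨by omega, by omega, ?_, ?_⟩
        · rw [show (i - 1) - 1 = i - 2 by omega] at h3; exact h3
        · rw [show (i - 1) + 1 = i by omega] at h4; exact h4
    · have hieq : i = n + 1 := by omega
      subst hieq
      have e1 : ofPerm (insPerm ρ x) (n + 1 + 1) = n + 2 := by
        rw [show n + 1 + 1 = n + 2 by omega]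
        exact ins_apply_last ρ hx
      have e2 : ofPerm (insPerm ρ x) (n + 1) = ofPerm ρ n := by
        rw [ins_apply_gt ρ hx (by omega) (by omega), Nat.add_sub_cancel]
      have e3 : ofPerm ρ n < n + 1 := wlt _ (by omega)
      have l : Ind (n + 3) (ofPerm (insPerm ρ x)) (n + 1) = 0 := by
        unfold Ind
        rw [if_neg]
        rintro ⟨-, -, -, hd⟩
        omega
      have r : Ind (n + 1) (ofPerm ρ) (n + 1 - 1) = 0 := by
        unfold Ind
        rw [if_neg]
        rintro ⟨-, hb, -⟩
        omega
      rw [l, r]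
  -- sum manipulations
  have hpk' : pkNum (n + 3) (ofPerm (insPerm ρ x))
      = ∑ i ∈ Finset.Ico 0 (n + 2), Ind (n + 3) (ofPerm (insPerm ρ x)) i := by
    rw [pkNum_eq_sum (n + 3) (n + 2) (by omega) _, Finset.range_eq_Ico]
  have hsplit : ∑ i ∈ Finset.Ico 0 (n + 2), Ind (n + 3) (ofPerm (insPerm ρ x)) i
      = ∑ i ∈ Finset.Ico 0 x, Ind (n + 3) (ofPerm (insPerm ρ x)) i
        + ∑ i ∈ Finset.Ico x (n + 2), Ind (n + 3) (ofPerm (insPerm ρ x)) i :=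
    (Finset.sum_Ico_consecutive _ (by omega) (by omega)).symm
  have h2 : ∑ i ∈ Finset.Ico x (n + 2), Ind (n + 3) (ofPerm (insPerm ρ x)) i
      = Ind (n + 3) (ofPerm (insPerm ρ x)) x
        + ∑ i ∈ Finset.Ico (x + 1) (n + 2), Ind (n + 3) (ofPerm (insPerm ρ x)) i :=
    Finset.sum_eq_sum_Ico_succ_bot (by omega) _
  have h3 : ∑ i ∈ Finset.Ico (x + 1) (n + 2), Ind (n + 3) (ofPerm (insPerm ρ x)) i
      = Ind (n + 3) (ofPerm (insPerm ρ x)) (x + 1)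
        + ∑ i ∈ Finset.Ico (x + 2) (n + 2), Ind (n + 3) (ofPerm (insPerm ρ x)) i :=
    Finset.sum_eq_sum_Ico_succ_bot (by omega) _
  have h4 : ∑ i ∈ Finset.Ico (x + 2) (n + 2), Ind (n + 3) (ofPerm (insPerm ρ x)) i
      = ∑ i ∈ Finset.Ico (x + 1) (n + 1), Ind (n + 1) (ofPerm ρ) i := by
    rw [Finset.sum_Ico_eq_sum_range, Finset.sum_Ico_eq_sum_range]
    rw [show n + 2 - (x + 2) = n + 1 - (x + 1) by omega]
    apply Finset.sum_congr rfl
    intro i hi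
    rw [Finset.mem_range] at hi
    rw [keyE (x + 2 + i) (by omega) (by omega)]
    congr 1
    omega
  have h5 : ∑ i ∈ Finset.Ico 0 x, Ind (n + 3) (ofPerm (insPerm ρ x)) i
        + Ind (n + 1) (ofPerm ρ) (x - 1)
      = ∑ i ∈ Finset.Ico 0 x, Ind (n + 1) (ofPerm ρ) i := by
    rcases Nat.eq_zero_or_pos x with h0 | h0
    · subst h0
      simp [Ind_zero]
    · obtain ⟨y, rfl⟩ : ∃ y, x = y + 1 := ⟨x - 1, by omega⟩
      rw [Finset.sum_Ico_succ_top (by omega), Finset.sum_Ico_succ_top (by omega)]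
      have kb : Ind (n + 3) (ofPerm (insPerm ρ (y + 1))) y = 0 := by
        have := keyB (by omega)
        rwa [show (y + 1) - 1 = y by omega] at this
      rw [show (y + 1) - 1 = y by omega]
      have heq : ∑ i ∈ Finset.Ico 0 y, Ind (n + 3) (ofPerm (insPerm ρ (y + 1))) i
          = ∑ i ∈ Finset.Ico 0 y, Ind (n + 1) (ofPerm ρ) i :=
        Finset.sum_congr rfl (fun i hi => keyA i (by rw [Finset.mem_Ico] at hi; omega))
      omega
  have h6 : ∑ i ∈ Finset.Ico 0 x, Ind (n + 1) (ofPerm ρ) i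
      + (Ind (n + 1) (ofPerm ρ) x + ∑ i ∈ Finset.Ico (x + 1) (n + 1), Ind (n + 1) (ofPerm ρ) i)
      = pkNum (n + 1) (ofPerm ρ) := by
    rw [← Finset.sum_eq_sum_Ico_succ_bot (show x < n + 1 by omega)]
    rw [Finset.sum_Ico_consecutive _ (by omega) (by omega)]
    rw [pkNum_eq_sum (n + 1) (n + 1) (by omega) _, Finset.range_eq_Ico]
  omega

lemma sum_x {n : ℕ} (ρ : Equiv.Perm (Fin (n + 1))) :
    (∑ x ∈ Finset.range (n + 1), pkNum (n + 3) (ofPerm (insPerm ρ x)))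
        + 2 * pkNum (n + 1) (ofPerm ρ)
      = (n + 1) * pkNum (n + 1) (ofPerm ρ) + n := by
  have main : ∀ x ∈ Finset.range (n + 1),
      pkNum (n + 3) (ofPerm (insPerm ρ x))
          + (Ind (n + 1) (ofPerm ρ) (x - 1) + Ind (n + 1) (ofPerm ρ) x)
        = pkNum (n + 1) (ofPerm ρ) + (if 1 ≤ x then 1 else 0) := by
    intro x hxm
    rw [Finset.mem_range] at hxm
    have := pk_ins ρ (show x ≤ n by omega)
    omega
  have hsum := Finset.sum_congr rfl main
  rw [Finset.sum_add_distrib, Finset.sum_add_distrib, Finset.sum_add_distrib] at hsum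
  have c1 : ∑ x ∈ Finset.range (n + 1), Ind (n + 1) (ofPerm ρ) (x - 1)
      = pkNum (n + 1) (ofPerm ρ) := by
    rw [Finset.sum_range_succ']
    simp only [Nat.add_sub_cancel]
    rw [show (0 : ℕ) - 1 = 0 by omega, Ind_zero]
    rw [pkNum_eq_sum (n + 1) n (by omega) _]
    omega
  have c2 : ∑ x ∈ Finset.range (n + 1), Ind (n + 1) (ofPerm ρ) x
      = pkNum (n + 1) (ofPerm ρ) :=
    (pkNum_eq_sum (n + 1) (n + 1) (by omega) _).symm
  have c3 : ∑ x ∈ Finset.range (n + 1), (if 1 ≤ x then (1 : ℕ) else 0) = n := by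
    rw [Finset.sum_range_succ']
    simp
  have c4 : ∑ _x ∈ Finset.range (n + 1), pkNum (n + 1) (ofPerm ρ)
      = (n + 1) * pkNum (n + 1) (ofPerm ρ) := by
    rw [Finset.sum_const, Finset.card_range, smul_eq_mul]
  omega
lemma sum_cluster_succ {k : ℕ} (g : Equiv.Perm (Fin (2 * (k + 1) + 1)) → ℕ) :
    ∑ π ∈ clusterSet 2 (k + 1), g π
      = ∑ ρ ∈ clusterSet 2 k, ∑ x ∈ Finset.range (2 * k + 1),
          g (insPerm (n := 2 * k) ρ x) := by
  rw [← Finset.sum_product']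
  refine (Finset.sum_bij (fun p (_ : p ∈ (clusterSet 2 k) ×ˢ Finset.range (2 * k + 1)) =>
      insPerm (n := 2 * k) p.1 p.2) ?_ ?_ ?_ ?_).symm
  · rintro ⟨ρ, x⟩ hp
    rw [Finset.mem_product, Finset.mem_range] at hp
    exact (mem_ins_iff ρ (by omega)).mpr hp.1
  · rintro ⟨ρ1, x1⟩ h1 ⟨ρ2, x2⟩ h2 heq
    rw [Finset.mem_product, Finset.mem_range] at h1 h2
    have hx1 : x1 ≤ 2 * k := by omega
    have hx2 : x2 ≤ 2 * k := by omega
    have heq : insPerm (n := 2 * k) ρ1 x1 = insPerm (n := 2 * k) ρ2 x2 := heq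
    have e1 : ofPerm (insPerm (n := 2 * k) ρ1 x1)⁻¹ (2 * k + 1) = x1 := ins_inv_mid ρ1 hx1
    rw [heq, ins_inv_mid ρ2 hx2] at e1
    subst e1
    have hρ : ρ1 = ρ2 := by
      apply perm_ext
      intro i hi
      by_cases hix : i < x2
      · have a1 : ofPerm (insPerm (n := 2 * k) ρ1 x2) i = ofPerm ρ1 i := ins_apply_lt ρ1 hx1 hix
        have a2 : ofPerm (insPerm (n := 2 * k) ρ2 x2) i = ofPerm ρ2 i := ins_apply_lt ρ2 hx2 hix
        rw [heq] at a1
        omega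
      · have a1 : ofPerm (insPerm (n := 2 * k) ρ1 x2) (i + 1) = ofPerm ρ1 i := by
          rw [ins_apply_gt ρ1 hx1 (by omega) (by omega), Nat.add_sub_cancel]
        have a2 : ofPerm (insPerm (n := 2 * k) ρ2 x2) (i + 1) = ofPerm ρ2 i := by
          rw [ins_apply_gt ρ2 hx2 (by omega) (by omega), Nat.add_sub_cancel]
        rw [heq] at a1
        omega
    rw [hρ]
  · intro π hπ
    have hc : IsCluster 2 (k + 1) (ofPerm π⁻¹) := (Finset.mem_filter.mp hπ).2
    have hσlast : ofPerm π⁻¹ (2 * k + 2) = 2 * k + 2 := cluster_last_eq (k := k + 1) π hc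
    have hwin := hc k (by omega)
    have hwin1 : ofPerm π⁻¹ (2 * k + 1) < ofPerm π⁻¹ (2 * k) := hwin.1
    have hwin2 : ofPerm π⁻¹ (2 * k) < ofPerm π⁻¹ (2 * k + 2) := hwin.2.1
    set x := ofPerm π⁻¹ (2 * k + 1) with hxdef
    have hx : x ≤ 2 * k := by rw [hσlast] at hwin2; omega
    have hπx : ofPerm π x = 2 * k + 1 := ofPerm_apply_of_inv π (by omega) rfl
    have hπlast : ofPerm π (2 * k + 2) = 2 * k + 2 := ofPerm_apply_of_inv π (by omega) hσlast
    have hbound : ∀ p, p < 2 * k + 2 → p ≠ x → ofPerm π p < 2 * k + 1 := by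
      intro p hp hpx
      have h3 : ofPerm π p < 2 * k + 3 := ofPerm_lt π (by omega)
      have h4 : ofPerm π p ≠ 2 * k + 1 := by
        intro hcon
        have h6 := ofPerm_inv_eq π (show p < 2 * k + 3 by omega) hcon
        omega
      have h5 : ofPerm π p ≠ 2 * k + 2 := by
        intro hcon
        have := ofPerm_inv_eq π (show p < 2 * k + 3 by omega) hcon
        omega
      omega
    have hρfb : ∀ i : Fin (2 * k + 1),
        ofPerm π (if (i : ℕ) < x then (i : ℕ) else (i : ℕ) + 1) < 2 * k + 1 := by
      intro i
      have hi := i.isLt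
      split_ifs with h
      · exact hbound _ (by omega) (by omega)
      · exact hbound _ (by omega) (by omega)
    set ρfun : Fin (2 * k + 1) → Fin (2 * k + 1) := fun i =>
      ⟨ofPerm π (if (i : ℕ) < x then (i : ℕ) else (i : ℕ) + 1), hρfb i⟩ with hρfun
    have hinj : Function.Injective ρfun := by
      intro i j hij
      have hval := congrArg Fin.val hij
      simp only [hρfun] at hval
      have hi := i.isLt
      have hj := j.isLt
      have := ofPerm_inj π (i := if (i : ℕ) < x then (i : ℕ) else (i : ℕ) + 1)
        (j := if (j : ℕ) < x then (j : ℕ) else (j : ℕ) + 1)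
        (by split_ifs <;> omega) (by split_ifs <;> omega) hval
      apply Fin.ext
      split_ifs at this <;> omega
    set ρ : Equiv.Perm (Fin (2 * k + 1)) :=
      Equiv.ofBijective ρfun (Finite.injective_iff_bijective.mp hinj) with hρdef
    have hρ : ∀ i, i < 2 * k + 1 →
        ofPerm ρ i = ofPerm π (if i < x then i else i + 1) := by
      intro i hi
      have h7 : ofPerm ρ i = (ρfun ⟨i, hi⟩ : ℕ) := by
        simp only [ofPerm, dif_pos hi]
        rfl
      rw [h7]
    have heq : insPerm (n := 2 * k) ρ x = π := by
      apply perm_ext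
      intro i hi
      rcases Nat.lt_trichotomy i x with h | h | h
      · rw [ins_apply_lt ρ hx h, hρ i (by omega), if_pos h]
      · subst h
        rw [ins_apply_eq ρ hx]
        exact hπx.symm
      · by_cases h2 : i < 2 * k + 2
        · rw [ins_apply_gt ρ hx h h2, hρ (i - 1) (by omega), if_neg (by omega),
            show i - 1 + 1 = i by omega]
        · have : i = 2 * k + 2 := by omega
          subst this
          rw [ins_apply_last ρ hx]
          exact hπlast.symm
    refine ⟨⟨ρ, x⟩, ?_, heq⟩
    rw [Finset.mem_product, Finset.mem_range]
    exact ⟨(mem_ins_iff ρ hx).mp (by rw [heq]; exact hπ), by omega⟩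
  · intro p hp
    rfl
lemma card_rec (k : ℕ) :
    (clusterSet 2 (k + 1)).card = (2 * k + 1) * (clusterSet 2 k).card := by
  rw [Finset.card_eq_sum_ones, sum_cluster_succ (fun _ => 1)]
  simp [Finset.sum_const, mul_comm]

lemma sum_pk_rec (k : ℕ) :
    (∑ π ∈ clusterSet 2 (k + 1), pkNum (2 * (k + 1) + 1) (ofPerm π))
        + 2 * (∑ π ∈ clusterSet 2 k, pkNum (2 * k + 1) (ofPerm π))
      = (2 * k + 1) * (∑ π ∈ clusterSet 2 k, pkNum (2 * k + 1) (ofPerm π))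
        + (clusterSet 2 k).card * (2 * k) := by
  rw [sum_cluster_succ (fun π => pkNum (2 * (k + 1) + 1) (ofPerm π))]
  have key : ∀ ρ ∈ clusterSet 2 k,
      (∑ x ∈ Finset.range (2 * k + 1),
          pkNum (2 * (k + 1) + 1) (ofPerm (insPerm (n := 2 * k) ρ x)))
        + 2 * pkNum (2 * k + 1) (ofPerm ρ)
      = (2 * k + 1) * pkNum (2 * k + 1) (ofPerm ρ) + 2 * k :=
    fun ρ _ => sum_x (n := 2 * k) ρ
  have hs := Finset.sum_congr rfl key
  rw [Finset.sum_add_distrib, Finset.sum_add_distrib, ← Finset.mul_sum, ← Finset.mul_sum,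
    Finset.sum_const, smul_eq_mul] at hs
  linarith [hs]

lemma card_zero : (clusterSet 2 0).card = 1 := by
  have h : ∀ π ∈ (Finset.univ : Finset (Equiv.Perm (Fin (2 * 0 + 1)))),
      IsCluster 2 0 (ofPerm π⁻¹) := by
    intro π _ j hj
    omega
  rw [clusterSet, Finset.filter_true_of_mem h, Finset.card_univ, Fintype.card_perm]
  rfl

lemma sum_zero : (∑ π ∈ clusterSet 2 0, pkNum (2 * 0 + 1) (ofPerm π)) = 0 := by
  apply Finset.sum_eq_zero
  intro π _
  rw [pkNum]
  rw [show (2 * 0 + 1 - 1 : ℕ) = 0 by omega]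
  rw [Finset.Ico_eq_empty (by omega)]
  simp

lemma card_pos (k : ℕ) : 0 < (clusterSet 2 k).card := by
  induction k with
  | zero => rw [card_zero]; omega
  | succ m ih =>
    rw [card_rec m]
    exact Nat.mul_pos (by omega) ih

lemma key_identity (m : ℕ) :
    (2 * (m : ℚ) - 1) * ((∑ π ∈ clusterSet 2 m, pkNum (2 * m + 1) (ofPerm π) : ℕ) : ℚ)
      = ((m : ℚ) * ((m : ℚ) - 1)) * (((clusterSet 2 m).card : ℕ) : ℚ) := by
  induction m with
  | zero =>
    rw [sum_zero]
    push_cast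
    ring
  | succ m ih =>
    have hc := card_rec m
    have hs := sum_pk_rec m
    have hc' : (((clusterSet 2 (m + 1)).card : ℕ) : ℚ)
        = (2 * (m : ℚ) + 1) * ((clusterSet 2 m).card : ℚ) := by
      rw [hc]; push_cast; ring
    have hs' : ((∑ π ∈ clusterSet 2 (m + 1), pkNum (2 * (m + 1) + 1) (ofPerm π) : ℕ) : ℚ)
          + 2 * ((∑ π ∈ clusterSet 2 m, pkNum (2 * m + 1) (ofPerm π) : ℕ) : ℚ)
        = (2 * (m : ℚ) + 1) * ((∑ π ∈ clusterSet 2 m, pkNum (2 * m + 1) (ofPerm π) : ℕ) : ℚ)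
          + ((clusterSet 2 m).card : ℚ) * (2 * (m : ℚ)) := by
      exact_mod_cast congrArg (Nat.cast : ℕ → ℚ) hs
    push_cast
    push_cast at ih hs' hc'
    linear_combination (2 * (m : ℚ) + 1) * hs' + (2 * (m : ℚ) + 1) * ih
      - ((m : ℚ) + 1) * (m : ℚ) * hc'


/-- the average number of peaks over `π ∈ S_{2k+1}` with `π⁻¹` a
`213`-cluster equals `k(k-1)/(2k-1)`. -/
theorem stmt17 (k : ℕ) (hk : 1 ≤ k) :
    ((clusterSet 2 k).sum (fun π => (pkNum (2 * k + 1) (ofPerm π) : ℚ))) /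
        ((clusterSet 2 k).card : ℚ)
      = ((k : ℚ) * ((k : ℚ) - 1)) / (2 * (k : ℚ) - 1) := by
  have hK := key_identity k
  have hCpos := card_pos k
  have hCq : ((clusterSet 2 k).card : ℚ) ≠ 0 := Nat.cast_ne_zero.mpr (by omega)
  have hk1 : (1 : ℚ) ≤ (k : ℚ) := by exact_mod_cast hk
  have h2k : (2 * (k : ℚ) - 1) ≠ 0 := by nlinarith
  have hsum : (clusterSet 2 k).sum (fun π => (pkNum (2 * k + 1) (ofPerm π) : ℚ))
      = ((∑ π ∈ clusterSet 2 k, pkNum (2 * k + 1) (ofPerm π) : ℕ) : ℚ) := by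
    rw [Nat.cast_sum]
  rw [hsum, div_eq_div_iff hCq h2k]
  linear_combination hK
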